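/- arXiv:1204.0683 — 5 statements merged into one kernel-verified Lean document; each statement's English description precedes it below -/
import Mathlib

section
/- Let n be a positive integer, let t be an n×n real matrix, and let W : ℝⁿ → Mat(n,n;ℝ) be a differentiable matrix-valued map such that W(q) is symmetric for every q and the Killing (equivariance) condition DW(q)[t q] = t·W(q) + W(q)·tᵀ holds for all q ∈ ℝⁿ, where DW(q)[v] denotes the Fréchet derivative of W at q in direction v. Define H(q,p) = ⟪p, W(q) p⟫ and Φ(q,p) = ⟪p, t q⟫. Then the canonical Poisson bracket {H, Φ} vanishes identically on ℝⁿ × ℝⁿ. -/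
/-!
The bracket `{H, Φ}` is the derivative of `H` along the Hamiltonian vector field of `Φ`, which
is the cotangent lift `(q, p) ↦ (t q, -tᵀ p)` of the linear field `q ↦ t q`. Along it,
`dH = pᵀ (DW(q)[t q]) p - pᵀ (t W(q) + W(q) tᵀ) p`, which is zero by the Killing condition.
-/

open Matrix BigOperators

attribute [local instance] Matrix.normedAddCommGroup Matrix.normedSpace

/-- The canonical Poisson bracket of two phase-space functions on ℝⁿ × ℝⁿ:
`{f,g}(q,p) = Σ_i ∂f/∂qⁱ ∂g/∂p_i − ∂f/∂p_i ∂g/∂qⁱ`. -/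
noncomputable def poissonBracket (n : ℕ)
    (f g : (Fin n → ℝ) × (Fin n → ℝ) → ℝ) :
    (Fin n → ℝ) × (Fin n → ℝ) → ℝ :=
  fun x => ∑ i : Fin n,
    (fderiv ℝ f x (Pi.single i 1, 0) * fderiv ℝ g x (0, Pi.single i 1)
      - fderiv ℝ f x (0, Pi.single i 1) * fderiv ℝ g x (Pi.single i 1, 0))

section Calculus

variable {𝕜 : Type*} [NontriviallyNormedField 𝕜] [CompleteSpace 𝕜]
  {E : Type*} [NormedAddCommGroup E] [NormedSpace 𝕜 E] {ι : Type*} [Fintype ι] {x : E}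

theorem DifferentiableAt.dotProduct {f g : E → ι → 𝕜} (hf : DifferentiableAt 𝕜 f x)
    (hg : DifferentiableAt 𝕜 g x) : DifferentiableAt 𝕜 (fun y => f y ⬝ᵥ g y) x :=
  ((dotProductBilin 𝕜 𝕜 : (ι → 𝕜) →ₗ[𝕜] _ →ₗ[𝕜] 𝕜).toContinuousBilinearMap.hasFDerivAt_of_bilinear
    hf.hasFDerivAt hg.hasFDerivAt).differentiableAt

theorem fderiv_dotProduct_apply {f g : E → ι → 𝕜} (hf : DifferentiableAt 𝕜 f x)
    (hg : DifferentiableAt 𝕜 g x) (v : E) :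
    fderiv 𝕜 (fun y => f y ⬝ᵥ g y) x v = f x ⬝ᵥ fderiv 𝕜 g x v + fderiv 𝕜 f x v ⬝ᵥ g x :=
  congr($((dotProductBilin 𝕜 𝕜 : (ι → 𝕜) →ₗ[𝕜] _ →ₗ[𝕜] 𝕜).toContinuousBilinearMap.fderiv_of_bilinear
    hf hg) v)

theorem DifferentiableAt.mulVec {A : E → Matrix ι ι 𝕜} {g : E → ι → 𝕜}
    (hA : DifferentiableAt 𝕜 A x) (hg : DifferentiableAt 𝕜 g x) :
    DifferentiableAt 𝕜 (fun y => A y *ᵥ g y) x :=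
  ((mulVecBilin 𝕜 𝕜 : Matrix ι ι 𝕜 →ₗ[𝕜] _ →ₗ[𝕜] ι → 𝕜).toContinuousBilinearMap.hasFDerivAt_of_bilinear
    hA.hasFDerivAt hg.hasFDerivAt).differentiableAt

theorem fderiv_mulVec_apply {A : E → Matrix ι ι 𝕜} {g : E → ι → 𝕜}
    (hA : DifferentiableAt 𝕜 A x) (hg : DifferentiableAt 𝕜 g x) (v : E) :
    fderiv 𝕜 (fun y => A y *ᵥ g y) x v = A x *ᵥ fderiv 𝕜 g x v + fderiv 𝕜 A x v *ᵥ g x :=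
  congr($((mulVecBilin 𝕜 𝕜 : Matrix ι ι 𝕜 →ₗ[𝕜] _ →ₗ[𝕜] ι → 𝕜).toContinuousBilinearMap.fderiv_of_bilinear
    hA hg) v)

theorem fderiv_snd_dotProduct_mulVec_fst_apply (t : Matrix ι ι 𝕜) (q p u v : ι → 𝕜) :
    fderiv 𝕜 (fun x : (ι → 𝕜) × (ι → 𝕜) => x.2 ⬝ᵥ t *ᵥ x.1) (q, p) (u, v)
      = p ⬝ᵥ t *ᵥ u + v ⬝ᵥ t *ᵥ q := by
  rw [fderiv_dotProduct_apply differentiableAt_snd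
    ((differentiableAt_const t).mulVec differentiableAt_fst),
    fderiv_mulVec_apply (differentiableAt_const t) differentiableAt_fst]
  simp [fderiv_fst, fderiv_snd]

theorem fderiv_snd_dotProduct_mulVec_snd_apply {W : (ι → 𝕜) → Matrix ι ι 𝕜} {q : ι → 𝕜}
    (hW : DifferentiableAt 𝕜 W q) (p u v : ι → 𝕜) :
    fderiv 𝕜 (fun x : (ι → 𝕜) × (ι → 𝕜) => x.2 ⬝ᵥ W x.1 *ᵥ x.2) (q, p) (u, v)
      = p ⬝ᵥ (W q *ᵥ v + fderiv 𝕜 W q u *ᵥ p) + v ⬝ᵥ W q *ᵥ p := by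
  have hW_fst : DifferentiableAt 𝕜 (fun x : (ι → 𝕜) × (ι → 𝕜) => W x.1) (q, p) :=
    hW.comp (q, p) differentiableAt_fst
  have hW_fst_fderiv : fderiv 𝕜 (fun x : (ι → 𝕜) × (ι → 𝕜) => W x.1) (q, p)
      = (fderiv 𝕜 W q).comp (fderiv 𝕜 Prod.fst (q, p)) :=
    fderiv_comp (q, p) hW differentiableAt_fst
  rw [fderiv_dotProduct_apply differentiableAt_snd (hW_fst.mulVec differentiableAt_snd),
    fderiv_mulVec_apply hW_fst differentiableAt_snd, hW_fst_fderiv]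
  simp [fderiv_fst, fderiv_snd]

end Calculus

theorem LinearMap.prod_apply_eq_sum_single {R M ι : Type*} [CommSemiring R] [AddCommMonoid M]
    [Module R M] [Fintype ι] [DecidableEq ι] (L : (ι → R) × (ι → R) →ₗ[R] M) (a b : ι → R) :
    L (a, b) = ∑ i, (a i • L (Pi.single i 1, 0) + b i • L (0, Pi.single i 1)) := by
  have hab : (a, b) = ∑ i, (a i • (Pi.single i 1, 0) + b i • (0, Pi.single i 1) :
      (ι → R) × (ι → R)) := by
    ext j <;> simp [Prod.fst_sum, Prod.snd_sum, Pi.single_apply]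
  conv_lhs => rw [hab]
  simp only [map_sum, map_add, map_smul]

theorem Matrix.dotProduct_mul_add_mul_transpose_mulVec {R ι : Type*} [CommSemiring R]
    [Fintype ι] (t W : Matrix ι ι R) (p : ι → R) :
    p ⬝ᵥ (t * W + W * tᵀ) *ᵥ p = (p ᵥ* t) ⬝ᵥ W *ᵥ p + p ⬝ᵥ W *ᵥ (p ᵥ* t) := by
  rw [add_mulVec, dotProduct_add, ← mulVec_mulVec, ← mulVec_mulVec, dotProduct_mulVec,
    mulVec_transpose]

/-- `X_g = (∂g/∂p, -∂g/∂q)`, the sign convention for which `{f, g} = df(X_g)`. -/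
noncomputable def hamiltonianVectorField (n : ℕ) (g : (Fin n → ℝ) × (Fin n → ℝ) → ℝ)
    (x : (Fin n → ℝ) × (Fin n → ℝ)) : (Fin n → ℝ) × (Fin n → ℝ) :=
  (fun i => fderiv ℝ g x (0, Pi.single i 1), -fun i => fderiv ℝ g x (Pi.single i 1, 0))

theorem poissonBracket_eq_fderiv_hamiltonianVectorField (n : ℕ)
    (f g : (Fin n → ℝ) × (Fin n → ℝ) → ℝ) (x : (Fin n → ℝ) × (Fin n → ℝ)) :
    poissonBracket n f g x = fderiv ℝ f x (hamiltonianVectorField n g x) := by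
  rw [hamiltonianVectorField, ← ContinuousLinearMap.coe_coe,
    LinearMap.prod_apply_eq_sum_single, poissonBracket]
  simp only [ContinuousLinearMap.coe_coe, Pi.neg_apply, smul_eq_mul]
  exact Finset.sum_congr rfl fun i _ => by ring

theorem hamiltonianVectorField_snd_dotProduct_mulVec_fst {n : ℕ} (t : Matrix (Fin n) (Fin n) ℝ)
    (q p : Fin n → ℝ) :
    hamiltonianVectorField n (fun x => x.2 ⬝ᵥ t *ᵥ x.1) (q, p) = (t *ᵥ q, -(p ᵥ* t)) := by
  simp only [hamiltonianVectorField, fderiv_snd_dotProduct_mulVec_fst_apply]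
  ext i <;> simp [dotProduct_mulVec] <;> rfl

theorem quadratic_constraint_commutes_with_linear_constraint_general
    (n : ℕ)
    (t : Matrix (Fin n) (Fin n) ℝ)
    (W : (Fin n → ℝ) → Matrix (Fin n) (Fin n) ℝ)
    (hWdiff : Differentiable ℝ W)
    (hKilling : ∀ q : Fin n → ℝ, fderiv ℝ W q (t.mulVec q) = t * W q + W q * tᵀ) :
    poissonBracket n (fun x => x.2 ⬝ᵥ (W x.1).mulVec x.2)
        (fun x => x.2 ⬝ᵥ t.mulVec x.1)
      = fun _ => 0 := by
  funext ⟨q, p⟩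
  rw [poissonBracket_eq_fderiv_hamiltonianVectorField,
    hamiltonianVectorField_snd_dotProduct_mulVec_fst,
    fderiv_snd_dotProduct_mulVec_snd_apply (hWdiff q), hKilling q, dotProduct_add,
    dotProduct_mul_add_mul_transpose_mulVec, mulVec_neg, dotProduct_neg, neg_dotProduct]
  ring

/-- If `W` is a differentiable symmetric-matrix valued map on ℝⁿ satisfying the
Killing (equivariance) condition `DW(q)[t q] = t·W(q) + W(q)·tᵀ`, then the quadratic
constraint `H(q,p) = ⟪p, W(q) p⟫` Poisson-commutes with the linear constraint
`Φ(q,p) = ⟪p, t q⟫`. -/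
theorem quadratic_constraint_commutes_with_linear_constraint
    (n : ℕ) (hn : 0 < n)
    (t : Matrix (Fin n) (Fin n) ℝ)
    (W : (Fin n → ℝ) → Matrix (Fin n) (Fin n) ℝ)
    (hWdiff : Differentiable ℝ W)
    (hWsymm : ∀ q, (W q).IsSymm)
    (hKilling : ∀ q : Fin n → ℝ, fderiv ℝ W q (t.mulVec q) = t * W q + W q * tᵀ) :
    poissonBracket n (fun x => x.2 ⬝ᵥ (W x.1).mulVec x.2)
        (fun x => x.2 ⬝ᵥ t.mulVec x.1)
      = fun _ => 0 :=
  quadratic_constraint_commutes_with_linear_constraint_general n t W hWdiff hKilling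
end

section
/- Let d and n be positive integers, k a nonzero real number, and q, π : Fin n → ℝ^d with q_I ≠ 0 and π_I ≠ 0 for all I. Then there exists φ : Fin n → ℝ with Σ_I φ_I = 0 such that the transformed constraints e^{−2φ_I} ‖π_I‖² − e^{2φ_I} |k| ‖q_I‖² = 0 hold for all I, if and only if ∏_{I} ‖π_I‖² = |k|^n ∏_{I} ‖q_I‖². Moreover, when it exists this φ is unique and is given explicitly by φ_I = (1/4) ln( ‖π_I‖² / (|k| ‖q_I‖²) ). -/
open BigOperators

/-!
Each transformed constraint involves only its own `φ_I` and is equivalent to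
`e^{4φ_I} = ‖π_I‖² / (|k| ‖q_I‖²)`, so it pins `φ_I` to the quarter-logarithm of that ratio.
A solution therefore exists iff this forced `φ` is mean-free, and its sum is a quarter of
the logarithm of `∏ ‖π_I‖² / (|k|ⁿ ∏ ‖q_I‖²)`.
-/

namespace Real

theorem exp_neg_two_mul_mul_sub_exp_two_mul_mul_eq_zero_iff {a b φ : ℝ} (ha : 0 < a)
    (hb : 0 < b) : exp (-(2 * φ)) * a - exp (2 * φ) * b = 0 ↔ φ = 1 / 4 * log (a / b) := by
  rw [sub_eq_zero, exp_neg, inv_mul_eq_iff_eq_mul₀ (exp_ne_zero _), ← mul_assoc, ← exp_add,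
    ← div_eq_iff hb.ne', eq_comm, ← exp_log (div_pos ha hb), exp_eq_exp, exp_log (div_pos ha hb)]
  constructor <;> intro h <;> linarith

end Real

open Real in
theorem Finset.sum_log_div_eq_zero_iff {ι : Type*} {s : Finset ι} {a b : ι → ℝ}
    (ha : ∀ i ∈ s, 0 < a i) (hb : ∀ i ∈ s, 0 < b i) :
    ∑ i ∈ s, log (a i / b i) = 0 ↔ ∏ i ∈ s, a i = ∏ i ∈ s, b i := by
  rw [← log_prod fun i hi => (div_pos (ha i hi) (hb i hi)).ne', Finset.prod_div_distrib,
    log_div (Finset.prod_pos ha).ne' (Finset.prod_pos hb).ne', sub_eq_zero,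
    log_injOn_pos.eq_iff (Finset.prod_pos ha) (Finset.prod_pos hb)]

theorem transformed_constraints_solvable_iff_global_hamiltonian_vanishes_general
    (d n : ℕ) (k : ℝ) (hk : k ≠ 0)
    (q π : Fin n → EuclideanSpace ℝ (Fin d))
    (hq : ∀ I, q I ≠ 0) (hπ : ∀ I, π I ≠ 0) :
    ((∃ φ : Fin n → ℝ, (∑ I, φ I = 0) ∧
        ∀ I, Real.exp (-(2 * φ I)) * ‖π I‖ ^ 2
              - Real.exp (2 * φ I) * (|k| * ‖q I‖ ^ 2) = 0) ↔
      (∏ I, ‖π I‖ ^ 2) = |k| ^ n * ∏ I, ‖q I‖ ^ 2)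
    ∧ ∀ φ : Fin n → ℝ, (∑ I, φ I = 0) →
        (∀ I, Real.exp (-(2 * φ I)) * ‖π I‖ ^ 2
              - Real.exp (2 * φ I) * (|k| * ‖q I‖ ^ 2) = 0) →
        φ = fun I => (1 / 4) * Real.log (‖π I‖ ^ 2 / (|k| * ‖q I‖ ^ 2)) := by
  have hπ_pos (I : Fin n) : 0 < ‖π I‖ ^ 2 := by have := hπ I; positivity
  have hq_pos (I : Fin n) : 0 < |k| * ‖q I‖ ^ 2 := by have := hq I; positivity
  have constraints_iff (φ : Fin n → ℝ) :
      (∀ I, Real.exp (-(2 * φ I)) * ‖π I‖ ^ 2 - Real.exp (2 * φ I) * (|k| * ‖q I‖ ^ 2) = 0) ↔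
        φ = fun I => 1 / 4 * Real.log (‖π I‖ ^ 2 / (|k| * ‖q I‖ ^ 2)) := by
    simp only [Real.exp_neg_two_mul_mul_sub_exp_two_mul_mul_eq_zero_iff (hπ_pos _) (hq_pos _),
      funext_iff]
  refine ⟨?_, fun φ _ hφ => (constraints_iff φ).1 hφ⟩
  simp only [constraints_iff, exists_eq_right, ← Finset.mul_sum, mul_eq_zero, one_div,
    inv_eq_zero, OfNat.ofNat_ne_zero, false_or]
  rw [Finset.sum_log_div_eq_zero_iff (fun I _ => hπ_pos I) (fun I _ => hq_pos I),
    Finset.prod_mul_distrib, Finset.prod_const, Finset.card_univ, Fintype.card_fin]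

/-- Solvability of the transformed constraints of the particle toy model by a mean-free
scale parameter: there exists `φ` with `Σ φ_I = 0` and
`e^{−2φ_I}‖π_I‖² − e^{2φ_I}|k|‖q_I‖² = 0` for all `I` iff
`∏ ‖π_I‖² = |k|^n ∏ ‖q_I‖²`; moreover such a `φ` is unique, given by
`φ_I = (1/4) ln(‖π_I‖²/(|k|‖q_I‖²))`. -/
theorem transformed_constraints_solvable_iff_global_hamiltonian_vanishes
    (d n : ℕ) (hd : 0 < d) (hn : 0 < n) (k : ℝ) (hk : k ≠ 0)
    (q π : Fin n → EuclideanSpace ℝ (Fin d))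
    (hq : ∀ I, q I ≠ 0) (hπ : ∀ I, π I ≠ 0) :
    ((∃ φ : Fin n → ℝ, (∑ I, φ I = 0) ∧
        ∀ I, Real.exp (-(2 * φ I)) * ‖π I‖ ^ 2
              - Real.exp (2 * φ I) * (|k| * ‖q I‖ ^ 2) = 0) ↔
      (∏ I, ‖π I‖ ^ 2) = |k| ^ n * ∏ I, ‖q I‖ ^ 2)
    ∧ ∀ φ : Fin n → ℝ, (∑ I, φ I = 0) →
        (∀ I, Real.exp (-(2 * φ I)) * ‖π I‖ ^ 2
              - Real.exp (2 * φ I) * (|k| * ‖q I‖ ^ 2) = 0) →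
        φ = fun I => (1 / 4) * Real.log (‖π I‖ ^ 2 / (|k| * ‖q I‖ ^ 2)) :=
  transformed_constraints_solvable_iff_global_hamiltonian_vanishes_general d n k hk q π hq hπ
end

section
/- Let n be a positive integer, V : ℝⁿ → ℝ continuously differentiable, E ∈ ℝ, and let q : ℝ → ℝⁿ be twice differentiable with kinetic energy T(λ) = (1/2)‖q′(λ)‖², and suppose T(λ) > 0 and E − V(q(λ)) > 0 for all λ. Assume q satisfies the Euler–Lagrange equation of Jacobi's action: (d/dλ)[ √((E − V(q(λ)))/T(λ)) · q′(λ) ] = − √( T(λ)/(E − V(q(λ))) ) · ∇V(q(λ)) for all λ. Let τ : ℝ → ℝ be differentiable with τ′(λ) = √( T(λ)/(E − V(q(λ))) ) (the ephemeris time), and let s : ℝ → ℝ be a differentiable right inverse of τ (τ(s(t)) = t for all t). Then the reparametrized curve Q = q ∘ s is twice differentiable and satisfies Newton's second law Q″(t) = −∇V(Q(t)) for all t. -/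
/-!
Along a Jacobi geodesic, the momentum `p = √((E − V)/T) q′` is exactly the velocity of `Q = q ∘ s`,
because `ds/dt = 1/τ′ = √((E − V)/T)`. The Euler–Lagrange equation says `dp/dλ = −τ′ ∇V(q)`,
so by the chain rule `dp/dt = (dp/dλ)/τ′ = −∇V(Q)`.
-/

section TimeChange

variable {F : Type*} [NormedAddCommGroup F] [NormedSpace ℝ F]

theorem deriv_comp_eq_of_hasDerivAt_inv {q : ℝ → F} {s g : ℝ → ℝ} (hq : Differentiable ℝ q)
    (hs : ∀ t, HasDerivAt s (g (s t))⁻¹ t) :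
    deriv (q ∘ s) = (fun l => (g l)⁻¹ • deriv q l) ∘ s :=
  funext fun t => ((hq (s t)).hasDerivAt.scomp t (hs t)).deriv

theorem hasDerivAt_deriv_comp_of_hasDerivAt_momentum {q : ℝ → F} {s g : ℝ → ℝ} {a : ℝ → F}
    (hq : Differentiable ℝ q) (hs : ∀ t, HasDerivAt s (g (s t))⁻¹ t) (hg : ∀ l, g l ≠ 0)
    (hp : ∀ l, HasDerivAt (fun x => (g x)⁻¹ • deriv q x) (g l • a l) l) (t : ℝ) :
    HasDerivAt (deriv (q ∘ s)) (a (s t)) t := by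
  rw [deriv_comp_eq_of_hasDerivAt_inv hq hs]
  simpa only [smul_smul, inv_mul_cancel₀ (hg (s t)), one_smul] using (hp (s t)).scomp t (hs t)

end TimeChange

theorem jacobi_geodesic_gives_newton_general
    (n : ℕ)
    (V : EuclideanSpace ℝ (Fin n) → ℝ) (hV : ContDiff ℝ 1 V)
    (E : ℝ)
    (q : ℝ → EuclideanSpace ℝ (Fin n))
    (hq : Differentiable ℝ q) (hq' : Differentiable ℝ (deriv q))
    (T : ℝ → ℝ) (hT : T = fun l => (1 / 2) * ‖deriv q l‖ ^ 2)
    (hTpos : ∀ l, 0 < T l)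
    (hEV : ∀ l, 0 < E - V (q l))
    (hEL : ∀ l : ℝ,
      deriv (fun x => Real.sqrt ((E - V (q x)) / T x) • deriv q x) l
        = -(Real.sqrt (T l / (E - V (q l))) • gradient V (q l)))
    (τ : ℝ → ℝ) (hτ : Differentiable ℝ τ)
    (hτ' : ∀ l, deriv τ l = Real.sqrt (T l / (E - V (q l))))
    (s : ℝ → ℝ) (hs : Differentiable ℝ s)
    (hrinv : ∀ t, τ (s t) = t) :
    Differentiable ℝ (q ∘ s) ∧ Differentiable ℝ (deriv (q ∘ s)) ∧
      ∀ t : ℝ, deriv (deriv (q ∘ s)) t = -gradient V ((q ∘ s) t) := by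
  set g : ℝ → ℝ := fun l => Real.sqrt (T l / (E - V (q l)))
  have hg : ∀ l, g l ≠ 0 := fun l => (Real.sqrt_pos.2 (div_pos (hTpos l) (hEV l))).ne'
  have hs' : ∀ t, HasDerivAt s (g (s t))⁻¹ t := fun t =>
    HasDerivAt.of_local_left_inverse (hs t).continuousAt ((hτ (s t)).hasDerivAt.congr_deriv (hτ' (s t)))
      (hg (s t)) (.of_forall hrinv)
  have hmomentum : (fun x => Real.sqrt ((E - V (q x)) / T x) • deriv q x) =
      fun x => (g x)⁻¹ • deriv q x := by
    funext x
    rw [← Real.sqrt_inv, inv_div]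
  have hTdiff : Differentiable ℝ T := hT ▸ (hq'.norm_sq ℝ).const_mul _
  have hmomentum_diff : Differentiable ℝ fun x => Real.sqrt ((E - V (q x)) / T x) • deriv q x :=
    fun l => ((((hV.differentiable one_ne_zero).comp hq l).const_sub E).div (hTdiff l)
      (hTpos l).ne' |>.sqrt (div_pos (hEV l) (hTpos l)).ne').smul (hq' l)
  have hp : ∀ l, HasDerivAt (fun x => (g x)⁻¹ • deriv q x) (g l • -gradient V (q l)) l := by
    intro l
    rw [← hmomentum, smul_neg, ← hEL l]
    exact (hmomentum_diff l).hasDerivAt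
  have hQ'' := hasDerivAt_deriv_comp_of_hasDerivAt_momentum hq hs' hg hp
  exact ⟨hq.comp hs, fun t => (hQ'' t).differentiableAt, fun t => (hQ'' t).deriv⟩

/-- Jacobi's geodesic principle yields Newton's second law in ephemeris time: if `q`
is twice differentiable with `T = (1/2)‖q′‖² > 0` and `E − V(q) > 0`, satisfies the
Euler–Lagrange equation of Jacobi's action
`(d/dλ)[√((E−V)/T) q′] = −√(T/(E−V)) ∇V(q)`, and `τ` is the ephemeris time
(`τ′ = √(T/(E−V))`) with differentiable right inverse `s`, then `Q = q ∘ s` is twice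
differentiable and satisfies `Q″(t) = −∇V(Q(t))`. -/
theorem jacobi_geodesic_gives_newton
    (n : ℕ) (hn : 0 < n)
    (V : EuclideanSpace ℝ (Fin n) → ℝ) (hV : ContDiff ℝ 1 V)
    (E : ℝ)
    (q : ℝ → EuclideanSpace ℝ (Fin n))
    (hq : Differentiable ℝ q) (hq' : Differentiable ℝ (deriv q))
    (T : ℝ → ℝ) (hT : T = fun l => (1 / 2) * ‖deriv q l‖ ^ 2)
    (hTpos : ∀ l, 0 < T l)
    (hEV : ∀ l, 0 < E - V (q l))
    (hEL : ∀ l : ℝ,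
      deriv (fun x => Real.sqrt ((E - V (q x)) / T x) • deriv q x) l
        = -(Real.sqrt (T l / (E - V (q l))) • gradient V (q l)))
    (τ : ℝ → ℝ) (hτ : Differentiable ℝ τ)
    (hτ' : ∀ l, deriv τ l = Real.sqrt (T l / (E - V (q l))))
    (s : ℝ → ℝ) (hs : Differentiable ℝ s)
    (hrinv : ∀ t, τ (s t) = t) :
    Differentiable ℝ (q ∘ s) ∧ Differentiable ℝ (deriv (q ∘ s)) ∧
      ∀ t : ℝ, deriv (deriv (q ∘ s)) t = -gradient V ((q ∘ s) t) :=
  jacobi_geodesic_gives_newton_general n V hV E q hq hq' T hT hTpos hEV hEL τ hτ hτ' s hs hrinv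
end

section
/- Let d and N be positive integers and, on the phase space (Fin N → ℝ^d) × (Fin N → ℝ^d) of positions q and momenta p, define the conformal constraints D_I(q,p) = ⟪q_I, p_I⟫ − ⟨⟪q, p⟫⟩, where ⟨x⟩ = (1/N)Σ_J x_J and ⟪q,p⟫ : Fin N → ℝ is J ↦ ⟪q_J, p_J⟫. Then: (i) the constraints are Abelian and first class, {D_I, D_J} = 0 for all I, J; and (ii) for any θ : Fin N → ℝ, the smeared constraint D(θ) = Σ_J θ_J D_J generates mean-free local scalings: {q_I^a, D(θ)} = (θ_I − ⟨θ⟩) q_I^a and {p_I^a, D(θ)} = −(θ_I − ⟨θ⟩) p_I^a for every particle I and component a. -/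
open BigOperators

/-- The canonical Poisson bracket on the phase space of `N` particles in `ℝ^d`:
`{f,g} = Σ_{I,a} ∂f/∂q_I^a ∂g/∂p_I^a − ∂f/∂p_I^a ∂g/∂q_I^a`. -/
noncomputable def poissonBracketP (d N : ℕ)
    (f g : (Fin N → Fin d → ℝ) × (Fin N → Fin d → ℝ) → ℝ) :
    (Fin N → Fin d → ℝ) × (Fin N → Fin d → ℝ) → ℝ :=
  fun x => ∑ I : Fin N, ∑ a : Fin d,
    (fderiv ℝ f x (Pi.single I (Pi.single a 1), 0)
        * fderiv ℝ g x (0, Pi.single I (Pi.single a 1))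
      - fderiv ℝ f x (0, Pi.single I (Pi.single a 1))
        * fderiv ℝ g x (Pi.single I (Pi.single a 1), 0))

/-- The conformal constraint of particle `I`:
`D_I(q,p) = ⟪q_I, p_I⟫ − ⟨⟪q,p⟫⟩`, with `⟨x⟩ = (1/N) Σ_J x_J`. -/
noncomputable def confConstraint (d N : ℕ) (I : Fin N) :
    (Fin N → Fin d → ℝ) × (Fin N → Fin d → ℝ) → ℝ :=
  fun x => (∑ a, x.1 I a * x.2 I a)
    - (1 / (N : ℝ)) * ∑ J, ∑ a, x.1 J a * x.2 J a

/-! Both the constraints `D_I` and the smeared constraint `D(θ)` are weighted dilation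
generators `Σ_J w_J ⟪q_J, p_J⟫`: for `D_I` the weights are `δ_IJ − 1/N`, for `D(θ)` they
are the mean-free `θ_J − ⟨θ⟩`. Such a generator has `∂/∂q_K^a = w_K p_K^a` and
`∂/∂p_K^a = w_K q_K^a`, so it rescales `q_K` by `w_K` and `p_K` by `−w_K`, and in the
bracket of two of them each term `u_K w_K (p_K^a q_K^a − q_K^a p_K^a)` vanishes. -/

namespace ConformalConstraints

abbrev PhaseSpace (d N : ℕ) := (Fin N → Fin d → ℝ) × (Fin N → Fin d → ℝ)

variable {d N : ℕ}

noncomputable def qCoord (I : Fin N) (a : Fin d) : PhaseSpace d N →L[ℝ] ℝ :=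
  ((ContinuousLinearMap.proj a : (Fin d → ℝ) →L[ℝ] ℝ).comp
    (ContinuousLinearMap.proj I)).comp (ContinuousLinearMap.fst ℝ _ _)

noncomputable def pCoord (I : Fin N) (a : Fin d) : PhaseSpace d N →L[ℝ] ℝ :=
  ((ContinuousLinearMap.proj a : (Fin d → ℝ) →L[ℝ] ℝ).comp
    (ContinuousLinearMap.proj I)).comp (ContinuousLinearMap.snd ℝ _ _)

@[simp] lemma qCoord_apply (I : Fin N) (a : Fin d) (x : PhaseSpace d N) :
    qCoord I a x = x.1 I a := rfl

@[simp] lemma pCoord_apply (I : Fin N) (a : Fin d) (x : PhaseSpace d N) :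
    pCoord I a x = x.2 I a := rfl

theorem poissonBracketP_fst_left (I : Fin N) (a : Fin d) (g : PhaseSpace d N → ℝ) :
    poissonBracketP d N (fun x => x.1 I a) g
      = fun x => fderiv ℝ g x (0, Pi.single I (Pi.single a 1)) := by
  funext x
  change poissonBracketP d N (qCoord I a) g x = _
  simp [poissonBracketP, ContinuousLinearMap.fderiv, Pi.single_apply, ite_apply, ite_mul]

theorem poissonBracketP_snd_left (I : Fin N) (a : Fin d) (g : PhaseSpace d N → ℝ) :
    poissonBracketP d N (fun x => x.2 I a) g
      = fun x => -fderiv ℝ g x (Pi.single I (Pi.single a 1), 0) := by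
  funext x
  change poissonBracketP d N (pCoord I a) g x = _
  simp [poissonBracketP, ContinuousLinearMap.fderiv, Pi.single_apply, ite_apply, ite_mul]

noncomputable def weightedDilation (w : Fin N → ℝ) (x : PhaseSpace d N) : ℝ :=
  ∑ J, w J * ∑ a, x.1 J a * x.2 J a

theorem fderiv_weightedDilation_apply (w : Fin N → ℝ) (x v : PhaseSpace d N) :
    fderiv ℝ (weightedDilation w) x v
      = ∑ J, w J * ∑ a, (x.1 J a * v.2 J a + x.2 J a * v.1 J a) := by
  have h : HasFDerivAt (weightedDilation w)
      (∑ J, w J • ∑ a, (x.1 J a • pCoord J a + x.2 J a • qCoord J a)) x :=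
    HasFDerivAt.fun_sum fun J _ => (HasFDerivAt.fun_sum fun a _ =>
      (qCoord J a).hasFDerivAt.mul (pCoord J a).hasFDerivAt).const_mul (w J)
  simp [h.fderiv]

theorem fderiv_weightedDilation_q (w : Fin N → ℝ) (x : PhaseSpace d N) (I : Fin N) (a : Fin d) :
    fderiv ℝ (weightedDilation w) x (Pi.single I (Pi.single a 1), 0) = w I * x.2 I a := by
  simp [fderiv_weightedDilation_apply, Pi.single_apply, ite_apply]

theorem fderiv_weightedDilation_p (w : Fin N → ℝ) (x : PhaseSpace d N) (I : Fin N) (a : Fin d) :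
    fderiv ℝ (weightedDilation w) x (0, Pi.single I (Pi.single a 1)) = w I * x.1 I a := by
  simp [fderiv_weightedDilation_apply, Pi.single_apply, ite_apply]

theorem poissonBracketP_weightedDilation (u w : Fin N → ℝ) :
    poissonBracketP d N (weightedDilation u) (weightedDilation w) = fun _ => 0 := by
  funext x
  simp only [poissonBracketP, fderiv_weightedDilation_q, fderiv_weightedDilation_p]
  exact Finset.sum_eq_zero fun I _ => Finset.sum_eq_zero fun a _ => by ring

theorem poissonBracketP_fst_weightedDilation (w : Fin N → ℝ) (I : Fin N) (a : Fin d) :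
    poissonBracketP d N (fun x => x.1 I a) (weightedDilation w) = fun x => w I * x.1 I a := by
  simp only [poissonBracketP_fst_left, fderiv_weightedDilation_p]

theorem poissonBracketP_snd_weightedDilation (w : Fin N → ℝ) (I : Fin N) (a : Fin d) :
    poissonBracketP d N (fun x => x.2 I a) (weightedDilation w) = fun x => -(w I * x.2 I a) := by
  simp only [poissonBracketP_snd_left, fderiv_weightedDilation_q]

theorem confConstraint_eq_weightedDilation (I : Fin N) :
    confConstraint d N I
      = weightedDilation (fun J => (Pi.single I 1 : Fin N → ℝ) J - 1 / (N : ℝ)) := by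
  funext x
  simp [confConstraint, weightedDilation, sub_mul, Finset.sum_sub_distrib, ← Finset.mul_sum,
    Pi.single_apply]

theorem sum_mul_confConstraint_eq_weightedDilation (θ : Fin N → ℝ) :
    (fun x => ∑ J, θ J * confConstraint d N J x)
      = weightedDilation (fun J => θ J - 1 / (N : ℝ) * ∑ K, θ K) := by
  funext x
  simp only [confConstraint, weightedDilation, mul_sub, sub_mul, Finset.sum_sub_distrib,
    ← Finset.sum_mul, ← Finset.mul_sum]
  ring

end ConformalConstraints

theorem conformal_constraints_abelian_and_generate_scalings_general
    (d N : ℕ) :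
    (∀ I J : Fin N,
      poissonBracketP d N (confConstraint d N I) (confConstraint d N J) = fun _ => 0)
    ∧ (∀ θ : Fin N → ℝ, ∀ I : Fin N, ∀ a : Fin d,
        (poissonBracketP d N (fun x => x.1 I a)
            (fun x => ∑ J, θ J * confConstraint d N J x)
          = fun x => (θ I - (1 / (N : ℝ)) * ∑ J, θ J) * x.1 I a)
        ∧ (poissonBracketP d N (fun x => x.2 I a)
            (fun x => ∑ J, θ J * confConstraint d N J x)
          = fun x => -((θ I - (1 / (N : ℝ)) * ∑ J, θ J) * x.2 I a))) := by
  open ConformalConstraints in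
  refine ⟨fun I J => ?_, fun θ I a => ?_⟩
  · simp only [confConstraint_eq_weightedDilation, poissonBracketP_weightedDilation]
  · rw [sum_mul_confConstraint_eq_weightedDilation]
    exact ⟨poissonBracketP_fst_weightedDilation _ I a,
      poissonBracketP_snd_weightedDilation _ I a⟩

/-- The conformal constraints `D_I` are Abelian (first class), and the smeared
constraint `D(θ) = Σ_J θ_J D_J` generates mean-free local scalings of `q` and `p`. -/
theorem conformal_constraints_abelian_and_generate_scalings
    (d N : ℕ) (hd : 0 < d) (hN : 0 < N) :
    (∀ I J : Fin N,
      poissonBracketP d N (confConstraint d N I) (confConstraint d N J) = fun _ => 0)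
    ∧ (∀ θ : Fin N → ℝ, ∀ I : Fin N, ∀ a : Fin d,
        (poissonBracketP d N (fun x => x.1 I a)
            (fun x => ∑ J, θ J * confConstraint d N J x)
          = fun x => (θ I - (1 / (N : ℝ)) * ∑ J, θ J) * x.1 I a)
        ∧ (poissonBracketP d N (fun x => x.2 I a)
            (fun x => ∑ J, θ J * confConstraint d N J x)
          = fun x => -((θ I - (1 / (N : ℝ)) * ∑ J, θ J) * x.2 I a))) :=
  conformal_constraints_abelian_and_generate_scalings_general d N
end

section
/- Let d and N be positive integers, q, p̄ : Fin N → ℝ^d, π̄ : Fin N → ℝ, and for φ : Fin N → ℝ set φ̂_J = φ_J − ⟨φ⟩ with ⟨φ⟩ = (1/N)Σ_K φ_K. Define the type-II generating function F(φ) = Σ_J e^{φ̂_J} ⟪q_J, p̄_J⟫ + Σ_J φ_J π̄_J. Then for each I, the partial derivative of F with respect to φ_I equals π̄_I + ( ⟪q_I, p_I⟫ − ⟨⟪q, p⟫⟩ ), where p_J := e^{φ̂_J} p̄_J and ⟪q,p⟫ : Fin N → ℝ is J ↦ ⟪q_J, p_J⟫. Consequently, the momentum conjugate to φ_I transforms under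 the best-matching canonical transformation as π̄_I = π_I^φ − ( ⟪q_I, p_I⟫ − ⟨⟪q, p⟫⟩ ), i.e. the trivial constraint π^φ = 0 is mapped to the conformal constraint π_I^φ − D_I = 0 with D_I = ⟪q_I, p_I⟫ − ⟨⟪q,p⟫⟩. -/
open RealInnerProductSpace BigOperators

namespace MeanFreeScaling

variable {N : ℕ}

noncomputable def meanFreeScale (J : Fin N) : (Fin N → ℝ) →L[ℝ] ℝ :=
  ContinuousLinearMap.proj J - (1 / (N : ℝ)) • ∑ K, ContinuousLinearMap.proj K

@[simp]
theorem meanFreeScale_apply (J : Fin N) (ψ : Fin N → ℝ) :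
    meanFreeScale J ψ = ψ J - (1 / (N : ℝ)) * ∑ K, ψ K := by
  simp [meanFreeScale]

theorem meanFreeScale_single (I J : Fin N) :
    meanFreeScale J (Pi.single I 1) = (Pi.single I 1 : Fin N → ℝ) J - 1 / (N : ℝ) := by
  simp [Finset.sum_pi_single']

/-- The `φ`-dependence of the generating function, with `c J = ⟪q J, p̄ J⟫`. -/
noncomputable def generatingFn (c π : Fin N → ℝ) (ψ : Fin N → ℝ) : ℝ :=
  (∑ J, Real.exp (ψ J - (1 / (N : ℝ)) * ∑ K, ψ K) * c J) + ∑ J, ψ J * π J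

theorem hasFDerivAt_generatingFn (c π φ : Fin N → ℝ) :
    HasFDerivAt (generatingFn c π)
      ((∑ J, (Real.exp (meanFreeScale J φ) * c J) • meanFreeScale J)
        + ∑ J, π J • ContinuousLinearMap.proj J) φ := by
  have hexp : ∀ J, HasFDerivAt (fun ψ => Real.exp (meanFreeScale J ψ) * c J)
      ((Real.exp (meanFreeScale J φ) * c J) • meanFreeScale J) φ := fun J => by
    simpa only [smul_smul, mul_comm] using
      ((meanFreeScale J).hasFDerivAt.exp).mul_const (c J)
  have hlin : ∀ J, HasFDerivAt (fun ψ : Fin N → ℝ => ψ J * π J)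
      (π J • ContinuousLinearMap.proj J) φ := fun J =>
    (ContinuousLinearMap.proj (R := ℝ) (φ := fun _ : Fin N => ℝ) J).hasFDerivAt.mul_const (π J)
  unfold generatingFn
  simpa only [meanFreeScale_apply] using
    (HasFDerivAt.fun_sum fun J _ => hexp J).fun_add (HasFDerivAt.fun_sum fun J _ => hlin J)

theorem fderiv_generatingFn_single (c π φ : Fin N → ℝ) (I : Fin N) :
    fderiv ℝ (generatingFn c π) φ (Pi.single I 1)
      = π I + (Real.exp (meanFreeScale I φ) * c I
          - (1 / (N : ℝ)) * ∑ J, Real.exp (meanFreeScale J φ) * c J) := by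
  rw [(hasFDerivAt_generatingFn c π φ).fderiv]
  simp only [add_apply, sum_apply, smul_apply, meanFreeScale_single, smul_eq_mul,
    ContinuousLinearMap.proj_apply, mul_sub, Finset.sum_sub_distrib, Pi.single_apply, mul_ite,
    mul_one, mul_zero, Finset.sum_ite_eq', Finset.mem_univ, if_true, ← Finset.sum_mul]
  ring

end MeanFreeScaling

open MeanFreeScaling in
theorem generating_function_produces_conformal_constraint_general
    (d N : ℕ)
    (q pbar : Fin N → EuclideanSpace ℝ (Fin d))
    (πbar : Fin N → ℝ) (φ : Fin N → ℝ)
    (F : (Fin N → ℝ) → ℝ)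
    (hF : F = fun ψ =>
      (∑ J, Real.exp (ψ J - (1 / (N : ℝ)) * ∑ K, ψ K) * ⟪q J, pbar J⟫)
        + ∑ J, ψ J * πbar J)
    (p : Fin N → EuclideanSpace ℝ (Fin d))
    (hp : p = fun J => Real.exp (φ J - (1 / (N : ℝ)) * ∑ K, φ K) • pbar J) :
    ∀ I : Fin N,
      fderiv ℝ F φ (Pi.single I 1)
        = πbar I + (⟪q I, p I⟫ - (1 / (N : ℝ)) * ∑ J, ⟪q J, p J⟫) := by
  intro I
  have hF' : F = generatingFn (fun J => ⟪q J, pbar J⟫) πbar := hF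
  subst hp
  simp only [hF', fderiv_generatingFn_single, meanFreeScale_apply, real_inner_smul_right]

/-- The best-matching canonical transformation for mean-free scalings: for the type-II
generating function `F(φ) = Σ_J e^{φ̂_J} ⟪q_J, p̄_J⟫ + Σ_J φ_J π̄_J` with
`φ̂_J = φ_J − ⟨φ⟩`, the momentum conjugate to `φ_I` is
`∂F/∂φ_I = π̄_I + (⟪q_I, p_I⟫ − ⟨⟪q,p⟫⟩)` where `p_J = e^{φ̂_J} p̄_J`; i.e. the
trivial constraint `π^φ = 0` is mapped to `π^φ_I − D_I = 0` with
`D_I = ⟪q_I, p_I⟫ − ⟨⟪q,p⟫⟩`. -/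
theorem generating_function_produces_conformal_constraint
    (d N : ℕ) (hd : 0 < d) (hN : 0 < N)
    (q pbar : Fin N → EuclideanSpace ℝ (Fin d))
    (πbar : Fin N → ℝ) (φ : Fin N → ℝ)
    (F : (Fin N → ℝ) → ℝ)
    (hF : F = fun ψ =>
      (∑ J, Real.exp (ψ J - (1 / (N : ℝ)) * ∑ K, ψ K) * ⟪q J, pbar J⟫)
        + ∑ J, ψ J * πbar J)
    (p : Fin N → EuclideanSpace ℝ (Fin d))
    (hp : p = fun J => Real.exp (φ J - (1 / (N : ℝ)) * ∑ K, φ K) • pbar J) :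
    ∀ I : Fin N,
      fderiv ℝ F φ (Pi.single I 1)
        = πbar I + (⟪q I, p I⟫ - (1 / (N : ℝ)) * ∑ J, ⟪q J, p J⟫) :=
  generating_function_produces_conformal_constraint_general d N q pbar πbar φ F hF p hp
end
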